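/- Let C be a chain complex of abelian groups indexed by the integers and f : C → C a chain map. Let K be the subcomplex of degreewise kernels, K_n = ker(f_n), and Q the quotient complex of degreewise cokernels, Q_n = C_n / f(C_n), both with the induced differentials. Then there is a long exact sequence ⋯ → H_i(K) → H_{i+1}(cone(f)) → H_{i+1}(Q) → H_{i-1}(K) → H_i(cone(f)) → H_i(Q) → H_{i-2}(K) → ⋯, in which H_i(K) → H_{i+1}(cone(f)) is induced by k ↦ (k, 0) ∈ C_i ⊕ C_{i+1} = cone(f)_{i+1}, H_{i+1}(cone(f)) → H_{i+1}(Q) is induced by (x, y) ↦ [y], and H_{i+1}(Q) → H_{i-1}(K) is a suitable connecting homomorphism (sending the class of a cycle represented by c ∈ C_{i+1} with d_C c = f(c') for some c' ∈ C_i to the class of d_C c' ∈ K_{i-1}). -/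

import Mathlib

/-- A chain complex of abelian groups indexed by `ℤ`. -/
structure CC where
  X : ℤ → Type
  grp : ∀ i, AddCommGroup (X i)
  d : ∀ i, X i →+ X (i - 1)
  dd : ∀ i (x : X i), d (i - 1) (d i x) = 0

attribute [instance] CC.grp

namespace CC

/-- Transport along an equality of degrees. -/
def cast (C : CC) {i j : ℤ} (h : i = j) : C.X i →+ C.X j where
  toFun x := h ▸ x
  map_zero' := by subst h; rfl
  map_add' := by subst h; intros; rfl

@[simp] lemma cast_rfl (C : CC) {i : ℤ} (x : C.X i) : C.cast rfl x = x := rfl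

/-- The `n`-cycles. -/
def cycles (C : CC) (n : ℤ) : AddSubgroup (C.X n) := (C.d n).ker

/-- The boundary map `C_{n+1} → C_n`. -/
def bd (C : CC) (n : ℤ) : C.X (n + 1) →+ C.X n :=
  (C.cast (by omega)).comp (C.d (n + 1))

/-- The boundaries, as a subgroup of the cycles. -/
def boundariesIn (C : CC) (n : ℤ) : AddSubgroup ↥(C.cycles n) :=
  (C.bd n).range.comap (C.cycles n).subtype

/-- The `n`-th homology group `H_n(C) = Z_n/B_n`. -/
abbrev homology (C : CC) (n : ℤ) : Type := ↥(C.cycles n) ⧸ C.boundariesIn n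

/-- Transport on homology along an equality of degrees (the identity map). -/
def hcast (C : CC) {i j : ℤ} (h : i = j) : C.homology i →+ C.homology j := by
  subst h; exact AddMonoidHom.id _

/-- A chain map. -/
structure Hom (C D : CC) where
  f : ∀ i, C.X i →+ D.X i
  comm : ∀ i (x : C.X i), D.d i (f i x) = f (i - 1) (C.d i x)

namespace Hom

variable {C D : CC}

lemma cast_comm (φ : Hom C D) {i j : ℤ} (h : i = j) (x : C.X i) :
    φ.f j (C.cast h x) = D.cast h (φ.f i x) := by subst h; rfl

/-- The map induced on cycles by a chain map. -/
def cyclesMap (φ : Hom C D) (n : ℤ) : ↥(C.cycles n) →+ ↥(D.cycles n) :=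
  ((φ.f n).comp (C.cycles n).subtype).codRestrict _ (fun x => by
    have hx : C.d n x.1 = 0 := x.2
    show D.d n (φ.f n x.1) = 0
    rw [φ.comm, hx, map_zero])

/-- The map `H_n(f) : H_n(C) → H_n(D)` induced on homology by a chain map. -/
def Hmap (φ : Hom C D) (n : ℤ) : C.homology n →+ D.homology n :=
  QuotientAddGroup.map _ _ (φ.cyclesMap n) (by
    rintro x ⟨z, hz⟩
    refine ⟨φ.f (n + 1) z, ?_⟩
    have hz' : C.bd n z = (x : C.X n) := hz
    show D.bd n (φ.f (n + 1) z) = φ.f n x.1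
    rw [← hz']
    show (D.cast _) (D.d (n + 1) (φ.f (n + 1) z)) = φ.f n ((C.cast _) (C.d (n + 1) z))
    rw [φ.comm, φ.cast_comm])

end Hom

/-- The mapping cone of a chain self-map, with `cone(f)_n = C_{n-1} ⊕ C_n` and
differential `d(x, y) = (-d x, f x + d y)`. -/
def cone {C : CC} (φ : Hom C C) : CC where
  X n := C.X (n - 1) × C.X n
  grp n := inferInstance
  d n := AddMonoidHom.prod
      (-((C.d (n - 1)).comp (AddMonoidHom.fst _ _)))
      (((φ.f (n - 1)).comp (AddMonoidHom.fst _ _)) +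
        ((C.d n).comp (AddMonoidHom.snd _ _)))
  dd n x := by
    obtain ⟨u, v⟩ := x
    simp only [AddMonoidHom.prod_apply, AddMonoidHom.neg_apply, AddMonoidHom.add_apply,
      AddMonoidHom.comp_apply, AddMonoidHom.coe_fst, AddMonoidHom.coe_snd, map_neg, map_add,
      neg_neg]
    rw [C.dd, C.dd, φ.comm]
    simp [Prod.ext_iff]

end CC

namespace CC

/-- The degreewise cokernel complex `Q_n = C_n / f(C_n)` of a chain self-map. -/
def cokerComplex {C : CC} (φ : Hom C C) : CC where
  X n := C.X n ⧸ (φ.f n).range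
  grp n := inferInstance
  d n := QuotientAddGroup.map _ _ (C.d n) (by
    rintro x ⟨y, rfl⟩
    exact ⟨C.d n y, (φ.comm n y).symm⟩)
  dd n x := by
    induction x using QuotientAddGroup.induction_on with
    | H z =>
      show QuotientAddGroup.mk (C.d (n - 1) (C.d n z)) = 0
      rw [C.dd]
      rfl

/-- The degreewise kernel complex `K_n = ker(f_n)` of a chain self-map. -/
def kerComplex {C : CC} (φ : Hom C C) : CC where
  X n := ↥(φ.f n).ker
  grp n := inferInstance
  d n := ((C.d n).comp (φ.f n).ker.subtype).codRestrict _ (fun x => by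
    have hx : φ.f n x.1 = 0 := x.2
    show φ.f (n - 1) (C.d n x.1) = 0
    rw [← φ.comm, hx, map_zero])
  dd n x := by
    apply Subtype.ext
    show C.d (n - 1) (C.d n x.1) = 0
    exact C.dd n x.1

end CC

/-!
The map `(x, y) ↦ [y]` is a surjective chain map `cone f → Q`. Its kernel
`M_n = C_{n-1} ⊕ f(C_n)` contains `K[-1]` via `k ↦ (k, 0)`, with quotient the cone of the
identity of `f(C)`, which is acyclic; so the sequence is the homology sequence of
`0 → M → cone f → Q → 0` with `H(M) ≅ H(K[-1])`. Concretely, the connecting map is read off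
the pairs `(c, c')` with `d c = f c'`: they surject onto the cycles of `Q` via `c`, and the
class of `d c' ∈ K` depends only on the homology class of `[c]`.
-/

namespace CC

variable {C : CC}

/- In degree `m - 1` boundaries come from `C.X m` with no transport (`C.bd` passes through
`C.X (m - 1 + 1)`, which is not definitionally `C.X m`), so the chases below are stated in
degrees of the form `m - 1`. -/
theorem mem_boundariesIn_sub_one_iff {m : ℤ} {x : C.cycles (m - 1)} :
    x ∈ C.boundariesIn (m - 1) ↔ ∃ z : C.X m, C.d m z = x := by
  have key : ∀ m' (_ : m' = m) (h : m' - 1 = m - 1),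
      (∃ z : C.X m', C.cast h (C.d m' z) = x) ↔ ∃ z : C.X m, C.d m z = x := by
    rintro m' rfl h
    rfl
  exact key (m - 1 + 1) (by omega) _

theorem homology_mk_eq_zero_sub_one_iff {m : ℤ} {x : C.cycles (m - 1)} :
    (QuotientAddGroup.mk x : C.homology (m - 1)) = 0 ↔ ∃ z : C.X m, C.d m z = x :=
  (QuotientAddGroup.eq_zero_iff x).trans mem_boundariesIn_sub_one_iff

section LongExactSequence

variable (f : Hom C C)

theorem mk_mem_cone_cycles_iff {n : ℤ} {x : C.X (n - 1)} {y : C.X n} :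
    ((x, y) : (cone f).X n) ∈ (cone f).cycles n ↔
      C.d (n - 1) x = 0 ∧ f.f (n - 1) x + C.d n y = 0 :=
  Prod.ext_iff.trans (and_congr neg_eq_zero Iff.rfl)

theorem cone_d_mk {n : ℤ} (x : C.X (n - 1)) (y : C.X n) :
    (cone f).d n ((x, y) : (cone f).X n) =
      ((-C.d (n - 1) x, f.f (n - 1) x + C.d n y) : C.X (n - 1 - 1) × C.X (n - 1)) :=
  rfl

theorem mem_kerComplex_cycles_iff {n : ℤ} {k : (f.f n).ker} :
    k ∈ (kerComplex f).cycles n ↔ C.d n k = 0 :=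
  Subtype.ext_iff

theorem mk_mem_cokerComplex_cycles_iff {n : ℤ} {c : C.X n} :
    (QuotientAddGroup.mk c : (cokerComplex f).X n) ∈ (cokerComplex f).cycles n ↔
      ∃ c' : C.X (n - 1), f.f (n - 1) c' = C.d n c :=
  QuotientAddGroup.eq_zero_iff _

def kerToConeCycles (m : ℤ) : (kerComplex f).cycles (m - 1) →+ (cone f).cycles m :=
  ((AddMonoidHom.inl _ _).comp
      ((f.f (m - 1)).ker.subtype.comp ((kerComplex f).cycles (m - 1)).subtype)).codRestrict _
    fun k => (mk_mem_cone_cycles_iff f).2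
      ⟨(mem_kerComplex_cycles_iff f).1 k.2, by rw [map_zero, add_zero]; exact k.1.2⟩

theorem boundariesIn_le_comap_kerToConeCycles (m : ℤ) :
    (kerComplex f).boundariesIn (m - 1) ≤
      ((cone f).boundariesIn m).comap (kerToConeCycles f m) := by
  intro k hk
  obtain ⟨n, rfl⟩ : ∃ n, m = n - 1 := ⟨m + 1, by omega⟩
  obtain ⟨⟨z, hfz⟩, hz⟩ := mem_boundariesIn_sub_one_iff.1 hk
  refine mem_boundariesIn_sub_one_iff.2 ⟨(-z, 0), ?_⟩
  rw [cone_d_mk]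
  refine Prod.ext ?_ ?_
  · change -C.d (n - 1) (-z) = k.1.1
    rw [map_neg, neg_neg]
    exact congrArg Subtype.val hz
  · change f.f (n - 1) (-z) + C.d n 0 = 0
    simpa using hfz

def kerToCone (m : ℤ) : (kerComplex f).homology (m - 1) →+ (cone f).homology m :=
  QuotientAddGroup.map _ _ (kerToConeCycles f m) (boundariesIn_le_comap_kerToConeCycles f m)

def coneToCoker : Hom (cone f) (cokerComplex f) where
  f n := (QuotientAddGroup.mk' _).comp (AddMonoidHom.snd _ _)
  comm n p := QuotientAddGroup.eq_iff_sub_mem.2 ⟨-p.1,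
    show f.f (n - 1) (-p.1) = C.d n p.2 - (f.f (n - 1) p.1 + C.d n p.2) by rw [map_neg]; abel⟩

def cycleLifts (j : ℤ) : AddSubgroup (C.X j × C.X (j - 1)) :=
  ((C.d j).comp (AddMonoidHom.fst _ _)).eqLocus ((f.f (j - 1)).comp (AddMonoidHom.snd _ _))

theorem mem_cycleLifts {j : ℤ} {p : C.X j × C.X (j - 1)} :
    p ∈ cycleLifts f j ↔ C.d j p.1 = f.f (j - 1) p.2 :=
  Iff.rfl

def cycleLiftsToCoker (j : ℤ) : cycleLifts f j →+ (cokerComplex f).homology j :=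
  (QuotientAddGroup.mk' _).comp <|
    (((QuotientAddGroup.mk' (f.f j).range).comp (AddMonoidHom.fst _ _)).comp
      (cycleLifts f j).subtype).codRestrict _ fun p =>
        (mk_mem_cokerComplex_cycles_iff f).2 ⟨p.1.2, p.2.symm⟩

def cycleLiftsToKer (j : ℤ) : cycleLifts f j →+ (kerComplex f).homology (j - 1 - 1) :=
  (QuotientAddGroup.mk' _).comp <|
    ((((C.d (j - 1)).comp ((AddMonoidHom.snd _ _).comp (cycleLifts f j).subtype)).codRestrict
      (f.f (j - 1 - 1)).ker fun p => by
        rw [AddMonoidHom.mem_ker]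
        change f.f (j - 1 - 1) (C.d (j - 1) p.1.2) = 0
        rw [← f.comm, ← (mem_cycleLifts f).1 p.2]
        exact C.dd _ _).codRestrict _ fun p => (mem_kerComplex_cycles_iff f).2 (C.dd _ _))

theorem cycleLiftsToCoker_surjective (j : ℤ) : Function.Surjective (cycleLiftsToCoker f j) := by
  intro y
  induction y using QuotientAddGroup.induction_on with | H q =>
  obtain ⟨q, hq⟩ := q
  obtain ⟨c, rfl⟩ := QuotientAddGroup.mk_surjective q
  obtain ⟨c', hc'⟩ := (mk_mem_cokerComplex_cycles_iff f).1 hq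
  exact ⟨⟨(c, c'), hc'.symm⟩, rfl⟩

theorem ker_cycleLiftsToCoker_le (j : ℤ) :
    (cycleLiftsToCoker f j).ker ≤ (cycleLiftsToKer f j).ker := by
  obtain ⟨n, rfl⟩ : ∃ n, j = n - 1 := ⟨j + 1, by omega⟩
  rintro ⟨⟨c, c'⟩, hcc'⟩ hp
  obtain ⟨v, hv⟩ := homology_mk_eq_zero_sub_one_iff.1 hp
  obtain ⟨v, rfl⟩ := QuotientAddGroup.mk_surjective v
  obtain ⟨u, hu⟩ := QuotientAddGroup.eq_iff_sub_mem.1 hv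
  replace hu : f.f (n - 1) u = C.d n v - c := hu
  rw [mem_cycleLifts] at hcc'
  refine homology_mk_eq_zero_sub_one_iff.2 ⟨⟨c' + C.d (n - 1) u, ?_⟩, Subtype.ext ?_⟩
  · rw [AddMonoidHom.mem_ker, map_add, ← f.comm, hu, map_sub, C.dd, ← hcc']
    abel
  · change C.d (n - 1 - 1) (c' + C.d (n - 1) u) = C.d (n - 1 - 1) c'
    rw [map_add, C.dd, add_zero]

noncomputable def connecting (j : ℤ) :
    (cokerComplex f).homology j →+ (kerComplex f).homology (j - 1 - 1) :=
  (cycleLiftsToCoker f j).liftOfSurjective (cycleLiftsToCoker_surjective f j)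
    ⟨cycleLiftsToKer f j, ker_cycleLiftsToCoker_le f j⟩

theorem connecting_cycleLiftsToCoker (j : ℤ) (p : cycleLifts f j) :
    connecting f j (cycleLiftsToCoker f j p) = cycleLiftsToKer f j p :=
  AddMonoidHom.liftOfRightInverse_comp_apply _ _ _ _ _

theorem Hmap_coneToCoker_mk {j : ℤ} {x : C.X (j - 1)} {y : C.X j}
    (h : ((x, y) : (cone f).X j) ∈ (cone f).cycles j) :
    (coneToCoker f).Hmap j (QuotientAddGroup.mk ⟨(x, y), h⟩) =
      cycleLiftsToCoker f j ⟨(y, -x), by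
        rw [mem_cycleLifts, map_neg, eq_neg_iff_add_eq_zero, add_comm]
        exact ((mk_mem_cone_cycles_iff f).1 h).2⟩ :=
  rfl

theorem exact_kerToCone_coneToCoker (n : ℤ) :
    Function.Exact (kerToCone f (n - 1)) ((coneToCoker f).Hmap (n - 1)) := by
  refine AddMonoidHom.exact_of_comp_of_mem_range ?_ ?_
  · ext
    rfl
  · intro z hz
    induction z using QuotientAddGroup.induction_on with | H z =>
    obtain ⟨⟨x, y⟩, hxy⟩ := z
    obtain ⟨hx, hfxy⟩ := (mk_mem_cone_cycles_iff f).1 hxy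
    obtain ⟨v, hv⟩ := homology_mk_eq_zero_sub_one_iff.1 hz
    obtain ⟨v, rfl⟩ := QuotientAddGroup.mk_surjective v
    obtain ⟨u, hu⟩ := QuotientAddGroup.eq_iff_sub_mem.1 hv
    replace hu : f.f (n - 1) u = C.d n v - y := hu
    refine ⟨QuotientAddGroup.mk ⟨⟨x - C.d (n - 1) u, ?_⟩, ?_⟩, ?_⟩
    · rw [AddMonoidHom.mem_ker, map_sub, ← f.comm, hu, map_sub, C.dd, zero_sub, sub_neg_eq_add]
      exact hfxy
    · exact (mem_kerComplex_cycles_iff f).2 (by rw [map_sub, hx, C.dd, sub_zero])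
    · refine QuotientAddGroup.eq_iff_sub_mem.2 (mem_boundariesIn_sub_one_iff.2 ⟨(u, -v), ?_⟩)
      rw [cone_d_mk]
      refine Prod.ext ?_ ?_
      · change -C.d (n - 1) u = x - C.d (n - 1) u - x
        abel
      · change f.f (n - 1) u + C.d n (-v) = 0 - y
        rw [hu, map_neg]
        abel

theorem exact_coneToCoker_connecting (j : ℤ) :
    Function.Exact ((coneToCoker f).Hmap j) (connecting f j) := by
  refine AddMonoidHom.exact_of_comp_of_mem_range ?_ ?_
  · ext ⟨⟨x, y⟩, h⟩
    rw [AddMonoidHom.comp_apply, AddMonoidHom.comp_apply, QuotientAddGroup.mk'_apply,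
      Hmap_coneToCoker_mk, connecting_cycleLiftsToCoker]
    refine homology_mk_eq_zero_sub_one_iff.2 ⟨0, Subtype.ext ?_⟩
    change C.d (j - 1) 0 = C.d (j - 1) (-x)
    rw [map_zero, map_neg, ((mk_mem_cone_cycles_iff f).1 h).1, neg_zero]
  · intro q hq
    obtain ⟨⟨⟨c, c'⟩, hcc'⟩, rfl⟩ := cycleLiftsToCoker_surjective f j q
    rw [connecting_cycleLiftsToCoker] at hq
    obtain ⟨⟨k, hk⟩, hkc'⟩ := homology_mk_eq_zero_sub_one_iff.1 hq
    replace hkc' : C.d (j - 1) k = C.d (j - 1) c' := congrArg Subtype.val hkc'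
    rw [mem_cycleLifts] at hcc'
    have hcycle : ((k - c', c) : (cone f).X j) ∈ (cone f).cycles j := by
      refine (mk_mem_cone_cycles_iff f).2 ⟨by rw [map_sub, hkc', sub_self], ?_⟩
      rw [map_sub, AddMonoidHom.mem_ker.1 hk, hcc']
      abel
    exact ⟨QuotientAddGroup.mk ⟨_, hcycle⟩, rfl⟩

theorem exact_connecting_kerToCone (j : ℤ) :
    Function.Exact (connecting f j) (kerToCone f (j - 1)) := by
  refine AddMonoidHom.exact_of_comp_of_mem_range ?_ ?_
  · refine AddMonoidHom.ext fun q => ?_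
    obtain ⟨⟨⟨c, c'⟩, hcc'⟩, rfl⟩ := cycleLiftsToCoker_surjective f j q
    rw [AddMonoidHom.comp_apply, connecting_cycleLiftsToCoker]
    refine homology_mk_eq_zero_sub_one_iff.2 ⟨(-c', c), ?_⟩
    rw [cone_d_mk]
    refine Prod.ext ?_ ?_
    · change -C.d (j - 1) (-c') = C.d (j - 1) c'
      rw [map_neg, neg_neg]
    · change f.f (j - 1) (-c') + C.d j c = 0
      rw [map_neg, (mem_cycleLifts f).1 hcc', neg_add_cancel]
  · intro k hk
    induction k using QuotientAddGroup.induction_on with | H k =>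
    obtain ⟨⟨w₁, w₂⟩, hw⟩ := homology_mk_eq_zero_sub_one_iff.1 hk
    rw [cone_d_mk] at hw
    have hlift : ((w₂, -w₁) : C.X j × C.X (j - 1)) ∈ cycleLifts f j := by
      rw [mem_cycleLifts, map_neg, eq_neg_iff_add_eq_zero, add_comm]
      exact congrArg Prod.snd hw
    refine ⟨cycleLiftsToCoker f j ⟨_, hlift⟩, ?_⟩
    rw [connecting_cycleLiftsToCoker]
    refine congrArg QuotientAddGroup.mk (Subtype.ext (Subtype.ext ?_))
    change C.d (j - 1) (-w₁) = k.1.1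
    rw [map_neg]
    exact congrArg Prod.fst hw

end LongExactSequence

end CC
open CC in
/-- For a chain self-map `f : C → C` with degreewise kernel complex `K` and degreewise
cokernel complex `Q`, there is a long exact sequence
`⋯ → H_i(K) → H_{i+1}(cone f) → H_{i+1}(Q) → H_{i-1}(K) → H_i(cone f) → ⋯`, where
`H_{i-1}(K) → H_i(cone f)` is induced by `k ↦ (k, 0)`, `H_i(cone f) → H_i(Q)` is induced by
`(x, y) ↦ [y]`, and `H_i(Q) → H_{i-2}(K)` is the connecting homomorphism sending the class of
a cycle represented by `c ∈ C_i` with `d c = f(c')`, `c' ∈ C_{i-1}`, to the class of `d c'`. -/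
theorem statement4 (C : CC) (f : CC.Hom C C) :
    ∃ (a : ∀ i : ℤ, (kerComplex f).homology (i - 1) →+ (cone f).homology i)
      (b : ∀ i : ℤ, (cone f).homology i →+ (cokerComplex f).homology i)
      (δ : ∀ i : ℤ, (cokerComplex f).homology i →+ (kerComplex f).homology (i - 1 - 1)),
      (∀ (i : ℤ) (k : ↥(f.f (i - 1)).ker) (hk : k ∈ (kerComplex f).cycles (i - 1))
        (hk' : (((k : C.X (i - 1)), 0) : (cone f).X i) ∈ (cone f).cycles i),
        a i (QuotientAddGroup.mk ⟨k, hk⟩) = QuotientAddGroup.mk ⟨((k : C.X (i - 1)), 0), hk'⟩) ∧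
      (∀ (i : ℤ) (z : (cone f).X i) (hz : z ∈ (cone f).cycles i)
        (hz' : (QuotientAddGroup.mk z.2 : (cokerComplex f).X i) ∈ (cokerComplex f).cycles i),
        b i (QuotientAddGroup.mk ⟨z, hz⟩) = QuotientAddGroup.mk ⟨QuotientAddGroup.mk z.2, hz'⟩) ∧
      (∀ (i : ℤ) (c : C.X i)
        (hc : (QuotientAddGroup.mk c : (cokerComplex f).X i) ∈ (cokerComplex f).cycles i)
        (c' : C.X (i - 1)) (hcc' : C.d i c = f.f (i - 1) c')
        (h2 : C.d (i - 1) c' ∈ (f.f (i - 1 - 1)).ker)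
        (h3 : (⟨C.d (i - 1) c', h2⟩ : (kerComplex f).X (i - 1 - 1)) ∈
          (kerComplex f).cycles (i - 1 - 1)),
        δ i (QuotientAddGroup.mk ⟨QuotientAddGroup.mk c, hc⟩) =
          QuotientAddGroup.mk ⟨⟨C.d (i - 1) c', h2⟩, h3⟩) ∧
      (∀ i : ℤ,
        Function.Exact (a i) (b i) ∧
        Function.Exact (b i) (δ i) ∧
        Function.Exact (δ (i + 1))
          ((a i).comp ((kerComplex f).hcast (show i + 1 - 1 - 1 = i - 1 by omega)))) := by
  refine ⟨kerToCone f, (coneToCoker f).Hmap, connecting f, fun _ _ _ _ => rfl, fun _ _ _ _ => rfl,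
    fun i c _ c' hcc' _ _ => connecting_cycleLiftsToCoker f i ⟨(c, c'), hcc'⟩,
    fun i => ⟨?_, exact_coneToCoker_connecting f i, ?_⟩⟩
  · obtain ⟨n, rfl⟩ : ∃ n, i = n - 1 := ⟨i + 1, by omega⟩
    exact exact_kerToCone_coneToCoker f n
  · have exact_connecting_comp_hcast : ∀ j (h : j - 1 - 1 = i - 1),
        Function.Exact (connecting f j) ((kerToCone f i).comp ((kerComplex f).hcast h)) := by
      rintro j h
      obtain rfl : i = j - 1 := by omega
      exact exact_connecting_kerToCone f j
    exact exact_connecting_comp_hcast (i + 1) _
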